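/- Let f be a real number with 0 < f < 1/3, and let π : ℝ → ℝ be the rlm_dpl1_extreme_3a function. Then π is a minimal valid function with parameter f; in particular π is nonnegative, π(0) = 0, π is periodic with period 1, π is subadditive, and π(x) + π(f−x) = 1 for all x ∈ ℝ. -/

import Mathlib

/-!
On `[0, 1)` the function is squeezed between lines of slope `2 / (1 + 2f)`: it lies above
`2t / (1 + 2f)` left of the breakpoint `(1 + f) / 2` and above `(2t - 1) / (1 + 2f)` everywhere,
and below `2t / (1 + 2f)` right of `f` and below `(2t + 1) / (1 + 2f)` everywhere. For
`t, u ∈ [0, 1)`, adding two lower bounds and comparing with an upper bound at `t + u` or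
`t + u - 1` proves subadditivity; the offsets `±1 / (1 + 2f)` balance except when `t + u ≤ f`
(where `π` is linear), when `t` or `u` vanishes, or when `t = u = (1 + f) / 2`.
Symmetry holds piecewise: `x ↦ f - x` maps `[0, f]` onto itself and, modulo 1, exchanges
`(f, (1 + f) / 2)` with `((1 + f) / 2, 1)`.
-/

/-- A minimal valid function for the Gomory–Johnson infinite group problem
with parameter `f`. -/
def MinimalValid (f : ℝ) (π : ℝ → ℝ) : Prop :=
  (∀ x, 0 ≤ π x) ∧ π 0 = 0 ∧ (∀ x, π (x + 1) = π x) ∧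
  (∀ x y, π (x + y) ≤ π x + π y) ∧ (∀ x, π x + π (f - x) = 1)

/-- The `rlm_dpl1_extreme_3a` function, periodic with period 1, defined via the
fractional part. -/
noncomputable def rlmDpl1Extreme3a (f : ℝ) : ℝ → ℝ := fun x =>
  let t := Int.fract x
  if t ≤ f then t / f
  else if t < (1 + f) / 2 then 2 * t / (1 + 2 * f)
  else if t = (1 + f) / 2 then 1 / 2
  else (2 * t - 1) / (1 + 2 * f)

variable {f t u : ℝ}

lemma rlmDpl1Extreme3a_of_mem_Ico (f : ℝ) (ht0 : 0 ≤ t) (ht1 : t < 1) :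
    rlmDpl1Extreme3a f t =
      if t ≤ f then t / f
      else if t < (1 + f) / 2 then 2 * t / (1 + 2 * f)
      else if t = (1 + f) / 2 then 1 / 2
      else (2 * t - 1) / (1 + 2 * f) := by
  simp only [rlmDpl1Extreme3a, Int.fract_eq_self.mpr ⟨ht0, ht1⟩]

lemma rlmDpl1Extreme3a_add_intCast (f x : ℝ) (n : ℤ) :
    rlmDpl1Extreme3a f (x + n) = rlmDpl1Extreme3a f x := by
  simp only [rlmDpl1Extreme3a, Int.fract_add_intCast]

lemma rlmDpl1Extreme3a_fract (f x : ℝ) :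
    rlmDpl1Extreme3a f (Int.fract x) = rlmDpl1Extreme3a f x := by
  simp only [rlmDpl1Extreme3a, Int.fract_fract]

lemma rlmDpl1Extreme3a_periodic (f : ℝ) : Function.Periodic (rlmDpl1Extreme3a f) 1 := by
  simpa using (rlmDpl1Extreme3a_add_intCast f · 1)

lemma rlmDpl1Extreme3a_of_le (hf1 : f < 1) (ht0 : 0 ≤ t) (htf : t ≤ f) :
    rlmDpl1Extreme3a f t = t / f := by
  rw [rlmDpl1Extreme3a_of_mem_Ico f ht0 (by linarith), if_pos htf]

lemma rlmDpl1Extreme3a_zero (hf0 : 0 < f) (hf1 : f < 1) : rlmDpl1Extreme3a f 0 = 0 := by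
  rw [rlmDpl1Extreme3a_of_le hf1 le_rfl hf0.le, zero_div]

lemma rlmDpl1Extreme3a_of_lt_of_lt (hf0 : 0 < f) (hft : f < t) (htm : t < (1 + f) / 2) :
    rlmDpl1Extreme3a f t = 2 * t / (1 + 2 * f) := by
  rw [rlmDpl1Extreme3a_of_mem_Ico f (by linarith) (by linarith), if_neg hft.not_ge, if_pos htm]

lemma rlmDpl1Extreme3a_mid (hf0 : 0 < f) (hf1 : f < 1) :
    rlmDpl1Extreme3a f ((1 + f) / 2) = 1 / 2 := by
  rw [rlmDpl1Extreme3a_of_mem_Ico f (by linarith) (by linarith), if_neg (by linarith),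
    if_neg (lt_irrefl _), if_pos rfl]

lemma rlmDpl1Extreme3a_of_mid_lt (hf0 : 0 < f) (hmt : (1 + f) / 2 < t) (ht1 : t < 1) :
    rlmDpl1Extreme3a f t = (2 * t - 1) / (1 + 2 * f) := by
  rw [rlmDpl1Extreme3a_of_mem_Ico f (by linarith) ht1, if_neg (by linarith),
    if_neg hmt.not_gt, if_neg hmt.ne']

section LinearBounds

variable (hf0 : 0 < f)
include hf0

lemma rlmDpl1Extreme3a_nonneg_of_mem_Ico (ht0 : 0 ≤ t) (ht1 : t < 1) :
    0 ≤ rlmDpl1Extreme3a f t := by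
  rw [rlmDpl1Extreme3a_of_mem_Ico f ht0 ht1]
  split_ifs with _ htm htm'
  · positivity
  · positivity
  · norm_num
  · have : 0 ≤ 2 * t - 1 := by
      linarith [lt_of_le_of_ne (not_lt.mp htm) (Ne.symm htm')]
    positivity

lemma two_mul_div_le_rlmDpl1Extreme3a (ht0 : 0 ≤ t) (htm : t < (1 + f) / 2) (hf1 : f < 1) :
    2 * t / (1 + 2 * f) ≤ rlmDpl1Extreme3a f t := by
  rw [rlmDpl1Extreme3a_of_mem_Ico f ht0 (by linarith)]
  split_ifs
  · rw [div_le_div_iff₀ (by positivity) hf0]; nlinarith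
  · exact le_rfl

lemma two_mul_sub_one_div_le_rlmDpl1Extreme3a (ht0 : 0 ≤ t) (ht1 : t < 1) :
    (2 * t - 1) / (1 + 2 * f) ≤ rlmDpl1Extreme3a f t := by
  have hq : 0 < 1 + 2 * f := by positivity
  rw [rlmDpl1Extreme3a_of_mem_Ico f ht0 ht1]
  split_ifs with _ _ htm
  · rw [div_le_div_iff₀ hq hf0]; nlinarith
  · rw [div_le_div_iff₀ hq hq]; nlinarith
  · rw [htm, div_le_iff₀ hq]; nlinarith
  · exact le_rfl

lemma rlmDpl1Extreme3a_le_two_mul_div (hft : f < t) (ht1 : t < 1) :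
    rlmDpl1Extreme3a f t ≤ 2 * t / (1 + 2 * f) := by
  have hq : 0 < 1 + 2 * f := by positivity
  rw [rlmDpl1Extreme3a_of_mem_Ico f (by linarith) ht1]
  split_ifs with htf _ htm
  · exact absurd htf hft.not_ge
  · exact le_rfl
  · rw [htm, le_div_iff₀ hq]; nlinarith
  · rw [div_le_div_iff₀ hq hq]; nlinarith

lemma rlmDpl1Extreme3a_le_two_mul_add_one_div (ht0 : 0 ≤ t) (ht1 : t < 1) :
    rlmDpl1Extreme3a f t ≤ (2 * t + 1) / (1 + 2 * f) := by
  have hq : 0 < 1 + 2 * f := by positivity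
  rw [rlmDpl1Extreme3a_of_mem_Ico f ht0 ht1]
  split_ifs with _ htm
  · rw [div_le_div_iff₀ hf0 hq]; nlinarith
  · rw [div_le_div_iff₀ hq hq]; nlinarith
  · rw [le_div_iff₀ hq]; nlinarith [not_lt.mp htm]
  · rw [div_le_div_iff₀ hq hq]; nlinarith

lemma rlmDpl1Extreme3a_nonneg (x : ℝ) : 0 ≤ rlmDpl1Extreme3a f x := by
  rw [← rlmDpl1Extreme3a_fract]
  exact rlmDpl1Extreme3a_nonneg_of_mem_Ico hf0 (Int.fract_nonneg x) (Int.fract_lt_one x)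

end LinearBounds

section Subadditivity

variable (hf0 : 0 < f) (hf1 : f < 1)
include hf0 hf1

lemma rlmDpl1Extreme3a_add_le_of_add_lt_one (ht0 : 0 ≤ t) (hu0 : 0 ≤ u) (htu : t + u < 1) :
    rlmDpl1Extreme3a f (t + u) ≤ rlmDpl1Extreme3a f t + rlmDpl1Extreme3a f u := by
  wlog htu' : t ≤ u generalizing t u
  · rw [add_comm t, add_comm (rlmDpl1Extreme3a f t)]
    exact this hu0 ht0 (by linarith) (by linarith)
  rcases le_or_gt (t + u) f with hf_le | hf_lt
  · rw [rlmDpl1Extreme3a_of_le hf1 (by linarith) hf_le,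
      rlmDpl1Extreme3a_of_le hf1 ht0 (by linarith), rlmDpl1Extreme3a_of_le hf1 hu0 (by linarith),
      add_div]
  rcases ht0.eq_or_lt with rfl | ht_pos
  · simp [rlmDpl1Extreme3a_zero hf0 hf1]
  have ht := two_mul_div_le_rlmDpl1Extreme3a hf0 ht0 (by linarith) hf1
  rcases lt_or_ge u ((1 + f) / 2) with hum | hmu
  · have hu := two_mul_div_le_rlmDpl1Extreme3a hf0 hu0 hum hf1
    have htu := rlmDpl1Extreme3a_le_two_mul_div hf0 hf_lt htu
    calc rlmDpl1Extreme3a f (t + u) ≤ 2 * (t + u) / (1 + 2 * f) := htu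
      _ = 2 * t / (1 + 2 * f) + 2 * u / (1 + 2 * f) := by ring
      _ ≤ _ := add_le_add ht hu
  · have hu := two_mul_sub_one_div_le_rlmDpl1Extreme3a hf0 hu0 (by linarith)
    calc rlmDpl1Extreme3a f (t + u) = (2 * (t + u) - 1) / (1 + 2 * f) :=
          rlmDpl1Extreme3a_of_mid_lt hf0 (by linarith) htu
      _ = 2 * t / (1 + 2 * f) + (2 * u - 1) / (1 + 2 * f) := by ring
      _ ≤ _ := add_le_add ht hu

lemma rlmDpl1Extreme3a_add_le_of_one_le_add (ht1 : t < 1) (hu1 : u < 1) (htu : 1 ≤ t + u) :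
    rlmDpl1Extreme3a f (t + u) ≤ rlmDpl1Extreme3a f t + rlmDpl1Extreme3a f u := by
  wlog htu' : t ≤ u generalizing t u
  · rw [add_comm t, add_comm (rlmDpl1Extreme3a f t)]
    exact this hu1 ht1 (by linarith) (by linarith)
  have ht0 : 0 ≤ t := by linarith
  have hu0 : 0 ≤ u := by linarith
  have hu := two_mul_sub_one_div_le_rlmDpl1Extreme3a hf0 hu0 hu1
  rw [← (rlmDpl1Extreme3a_periodic f).sub_eq]
  rcases lt_or_ge t ((1 + f) / 2) with htm | hmt
  · have ht := two_mul_div_le_rlmDpl1Extreme3a hf0 ht0 htm hf1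
    calc rlmDpl1Extreme3a f (t + u - 1) ≤ (2 * (t + u - 1) + 1) / (1 + 2 * f) :=
          rlmDpl1Extreme3a_le_two_mul_add_one_div hf0 (by linarith) (by linarith)
      _ = 2 * t / (1 + 2 * f) + (2 * u - 1) / (1 + 2 * f) := by ring
      _ ≤ _ := add_le_add ht hu
  have ht := two_mul_sub_one_div_le_rlmDpl1Extreme3a hf0 ht0 ht1
  rcases lt_or_ge f (t + u - 1) with hf_lt | hf_ge
  · calc rlmDpl1Extreme3a f (t + u - 1) ≤ 2 * (t + u - 1) / (1 + 2 * f) :=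
          rlmDpl1Extreme3a_le_two_mul_div hf0 hf_lt (by linarith)
      _ = (2 * t - 1) / (1 + 2 * f) + (2 * u - 1) / (1 + 2 * f) := by ring
      _ ≤ _ := add_le_add ht hu
  · obtain rfl : t = (1 + f) / 2 := by linarith
    obtain rfl : u = (1 + f) / 2 := by linarith
    rw [show (1 + f) / 2 + (1 + f) / 2 - 1 = f by ring, rlmDpl1Extreme3a_mid hf0 hf1,
      rlmDpl1Extreme3a_of_le hf1 hf0.le le_rfl, div_self hf0.ne']
    norm_num

lemma rlmDpl1Extreme3a_add_le (x y : ℝ) :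
    rlmDpl1Extreme3a f (x + y) ≤ rlmDpl1Extreme3a f x + rlmDpl1Extreme3a f y := by
  have hxy : x + y = Int.fract x + Int.fract y + ((⌊x⌋ + ⌊y⌋ : ℤ) : ℝ) := by
    simp only [Int.fract]; push_cast; ring
  rw [hxy, rlmDpl1Extreme3a_add_intCast, ← rlmDpl1Extreme3a_fract f x,
    ← rlmDpl1Extreme3a_fract f y]
  rcases lt_or_ge (Int.fract x + Int.fract y) 1 with h | h
  · exact rlmDpl1Extreme3a_add_le_of_add_lt_one hf0 hf1 (Int.fract_nonneg x)
      (Int.fract_nonneg y) h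
  · exact rlmDpl1Extreme3a_add_le_of_one_le_add hf0 hf1 (Int.fract_lt_one x)
      (Int.fract_lt_one y) h

end Subadditivity

section Symmetry

lemma rlmDpl1Extreme3a_add_one_add_sub_eq_one_of_lt_mid (hf0 : 0 < f) (hft : f < t)
    (htm : t < (1 + f) / 2) :
    rlmDpl1Extreme3a f t + rlmDpl1Extreme3a f (1 + f - t) = 1 := by
  rw [rlmDpl1Extreme3a_of_lt_of_lt hf0 hft htm,
    rlmDpl1Extreme3a_of_mid_lt hf0 (by linarith) (by linarith), ← add_div,
    div_eq_one_iff_eq (by linarith)]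
  ring

variable (hf0 : 0 < f) (hf1 : f < 1)
include hf0 hf1

lemma rlmDpl1Extreme3a_add_sub_eq_one_of_le (ht0 : 0 ≤ t) (htf : t ≤ f) :
    rlmDpl1Extreme3a f t + rlmDpl1Extreme3a f (f - t) = 1 := by
  rw [rlmDpl1Extreme3a_of_le hf1 ht0 htf,
    rlmDpl1Extreme3a_of_le hf1 (by linarith) (by linarith), ← add_div, add_sub_cancel,
    div_self hf0.ne']

lemma rlmDpl1Extreme3a_add_one_add_sub_eq_one (hft : f < t) (ht1 : t < 1) :
    rlmDpl1Extreme3a f t + rlmDpl1Extreme3a f (1 + f - t) = 1 := by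
  rcases lt_trichotomy t ((1 + f) / 2) with htm | rfl | hmt
  · exact rlmDpl1Extreme3a_add_one_add_sub_eq_one_of_lt_mid hf0 hft htm
  · rw [show 1 + f - (1 + f) / 2 = (1 + f) / 2 by ring, rlmDpl1Extreme3a_mid hf0 hf1]
    norm_num
  · have h := rlmDpl1Extreme3a_add_one_add_sub_eq_one_of_lt_mid (t := 1 + f - t) hf0
      (by linarith) (by linarith)
    rwa [sub_sub_cancel, add_comm] at h

lemma rlmDpl1Extreme3a_add_sub_eq_one (x : ℝ) :
    rlmDpl1Extreme3a f x + rlmDpl1Extreme3a f (f - x) = 1 := by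
  have hfx : f - x = f - Int.fract x + ((-⌊x⌋ : ℤ) : ℝ) := by
    simp only [Int.fract]; push_cast; ring
  rw [hfx, rlmDpl1Extreme3a_add_intCast, ← rlmDpl1Extreme3a_fract f x]
  rcases le_or_gt (Int.fract x) f with h | h
  · exact rlmDpl1Extreme3a_add_sub_eq_one_of_le hf0 hf1 (Int.fract_nonneg x) h
  · rw [← rlmDpl1Extreme3a_periodic f (f - Int.fract x),
      show f - Int.fract x + 1 = 1 + f - Int.fract x by ring]
    exact rlmDpl1Extreme3a_add_one_add_sub_eq_one hf0 hf1 h (Int.fract_lt_one x)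

end Symmetry

theorem rlmDpl1Extreme3a_minimal (f : ℝ) (hf0 : 0 < f) (hf : f < 1 / 3) :
    MinimalValid f (rlmDpl1Extreme3a f) ∧
    (∀ x, 0 ≤ rlmDpl1Extreme3a f x) ∧
    rlmDpl1Extreme3a f 0 = 0 ∧
    (∀ x, rlmDpl1Extreme3a f (x + 1) = rlmDpl1Extreme3a f x) ∧
    (∀ x y, rlmDpl1Extreme3a f (x + y) ≤ rlmDpl1Extreme3a f x + rlmDpl1Extreme3a f y) ∧
    (∀ x, rlmDpl1Extreme3a f x + rlmDpl1Extreme3a f (f - x) = 1) := by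
  have hf1 : f < 1 := by linarith
  have h : MinimalValid f (rlmDpl1Extreme3a f) :=
    ⟨rlmDpl1Extreme3a_nonneg hf0, rlmDpl1Extreme3a_zero hf0 hf1, rlmDpl1Extreme3a_periodic f,
      rlmDpl1Extreme3a_add_le hf0 hf1, rlmDpl1Extreme3a_add_sub_eq_one hf0 hf1⟩
  exact ⟨h, h⟩
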